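/- Let S be an n×n real matrix such that every eigenvalue of S, regarded as a complex matrix, has strictly negative real part. Then S is invertible and the Bochner integral over (0, ∞) of the matrix-valued function x ↦ exp(x·S) exists and equals −S⁻¹, i.e., ∫₀^∞ exp(xS) dx = −S⁻¹. -/

import Mathlib

attribute [local instance] Matrix.frobeniusNormedAddCommGroup Matrix.frobeniusNormedSpace

open MeasureTheory



open MeasureTheory Polynomial Filter
open scoped ENNReal NNReal

namespace IntegralExpAux

attribute [local instance] Matrix.frobeniusNormedRing Matrix.frobeniusNormedAlgebra

variable {n : Type*} [Fintype n] [DecidableEq n]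

lemma pow_mulVec (A : Matrix n n ℂ) {lam : ℂ} {v : n → ℂ}
    (hv : A.mulVec v = lam • v) (k : ℕ) : (A ^ k).mulVec v = lam ^ k • v := by
  induction k with
  | zero => simp
  | succ k ih =>
      rw [pow_succ, ← Matrix.mulVec_mulVec, hv, Matrix.mulVec_smul, ih, smul_smul, ← pow_succ']

noncomputable def mulVecCLM (v : n → ℂ) : Matrix n n ℂ →L[ℂ] (n → ℂ) :=
  LinearMap.toContinuousLinearMap
    { toFun := fun M => M.mulVec v
      map_add' := fun M N => Matrix.add_mulVec M N v
      map_smul' := fun c M => Matrix.smul_mulVec c M v }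

lemma exp_mulVec (A : Matrix n n ℂ) {lam : ℂ} {v : n → ℂ}
    (hv : A.mulVec v = lam • v) :
    (NormedSpace.exp A).mulVec v = Complex.exp lam • v := by
  have hsum := NormedSpace.expSeries_summable' (𝕂 := ℂ) A
  have h1 : (NormedSpace.exp A).mulVec v
      = ∑' k : ℕ, (mulVecCLM v) (((k.factorial : ℂ))⁻¹ • A ^ k) := by
    rw [NormedSpace.exp_eq_tsum ℂ]
    exact (mulVecCLM v).map_tsum hsum
  have h2 : ∀ k : ℕ, (mulVecCLM v) (((k.factorial : ℂ))⁻¹ • A ^ k)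
      = (((k.factorial : ℂ))⁻¹ * lam ^ k) • v := by
    intro k
    show (((k.factorial : ℂ))⁻¹ • A ^ k).mulVec v = _
    rw [Matrix.smul_mulVec, pow_mulVec A hv, smul_smul]
  rw [h1]
  simp_rw [h2]
  rw [Summable.tsum_smul_const]
  · congr 1
    rw [Complex.exp_eq_exp_ℂ, NormedSpace.exp_eq_tsum ℂ]
    simp [smul_eq_mul]
  · simpa [smul_eq_mul] using NormedSpace.expSeries_summable' (𝕂 := ℂ) lam

lemma aeval_mulVec (A : Matrix n n ℂ) {lam : ℂ} {v : n → ℂ}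
    (hv : A.mulVec v = lam • v) (p : ℂ[X]) :
    (Polynomial.aeval A p).mulVec v = p.eval lam • v := by
  induction p using Polynomial.induction_on' with
  | add p q hp hq => rw [map_add, Matrix.add_mulVec, hp, hq, Polynomial.eval_add, add_smul]
  | monomial k c =>
      rw [Polynomial.aeval_monomial, Polynomial.eval_monomial, Algebra.algebraMap_eq_smul_one,
        smul_mul_assoc, one_mul, Matrix.smul_mulVec, pow_mulVec A hv, smul_smul]

lemma exp_mem_range_aeval (A : Matrix n n ℂ) :
    ∃ q : ℂ[X], Polynomial.aeval A q = NormedSpace.exp A := by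
  have h : NormedSpace.exp A ∈ Algebra.adjoin ℂ {A} := by
    have hcl : IsClosed ((Subalgebra.toSubmodule (Algebra.adjoin ℂ {A}) : Submodule ℂ (Matrix n n ℂ)) : Set (Matrix n n ℂ)) :=
      Submodule.closed_of_finiteDimensional _
    have hsum := (NormedSpace.expSeries_summable' (𝕂 := ℂ) A).hasSum
    rw [NormedSpace.exp_eq_tsum ℂ]
    refine hcl.mem_of_tendsto hsum (Filter.Eventually.of_forall fun s => ?_)
    refine Submodule.sum_mem _ fun k _ => Submodule.smul_mem _ _ ?_
    rw [Subalgebra.mem_toSubmodule]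
    exact pow_mem (Algebra.self_mem_adjoin_singleton ℂ A) k
  rw [Algebra.adjoin_singleton_eq_range_aeval] at h
  obtain ⟨q, hq⟩ := h
  exact ⟨q, hq⟩

lemma exists_eigenvector (A : Matrix n n ℂ) {lam : ℂ} (hlam : lam ∈ spectrum ℂ A) :
    ∃ v : n → ℂ, v ≠ 0 ∧ A.mulVec v = lam • v := by
  rw [spectrum.mem_iff] at hlam
  have h2 : (algebraMap ℂ (Matrix n n ℂ) lam - A).det = 0 := by
    by_contra h
    exact hlam ((Matrix.isUnit_iff_isUnit_det _).mpr (isUnit_iff_ne_zero.mpr h))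
  obtain ⟨v, hv0, hv⟩ := Matrix.exists_mulVec_eq_zero_iff.mpr h2
  refine ⟨v, hv0, ?_⟩
  rw [Matrix.sub_mulVec, Algebra.algebraMap_eq_smul_one, Matrix.smul_mulVec,
    Matrix.one_mulVec, sub_eq_zero] at hv
  exact hv.symm

lemma spectrum_exp [Nonempty n] (A : Matrix n n ℂ) :
    spectrum ℂ (NormedSpace.exp A) = Complex.exp '' spectrum ℂ A := by
  obtain ⟨q, hq⟩ := exp_mem_range_aeval A
  have hne : (spectrum ℂ A).Nonempty := spectrum.nonempty A
  have hmap := spectrum.map_polynomial_aeval_of_nonempty A q hne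
  rw [← hq, hmap]
  refine Set.image_congr fun lam hlam => ?_
  obtain ⟨v, hv0, hv⟩ := exists_eigenvector A hlam
  have h1 := aeval_mulVec A hv q
  rw [hq, exp_mulVec A hv] at h1
  have h2 : (q.eval lam - Complex.exp lam) • v = 0 := by
    rw [sub_smul, h1, sub_self]
  rcases smul_eq_zero.mp h2 with h | h
  · exact (sub_eq_zero.mp h).symm ▸ rfl
  · exact absurd h hv0



variable {n : Type*} [Fintype n] [DecidableEq n]

lemma norm_map_ofReal (M : Matrix n n ℝ) : ‖M.map (Complex.ofReal ·)‖ = ‖M‖ := by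
  simp_rw [Matrix.frobenius_norm_def, Matrix.map_apply, Complex.norm_real]

lemma map_exp_ofReal (M : Matrix n n ℝ) :
    (NormedSpace.exp M).map (Complex.ofReal ·) = NormedSpace.exp (M.map (Complex.ofReal ·)) := by
  have hcont : Continuous (Complex.ofRealHom.mapMatrix : Matrix n n ℝ →+* Matrix n n ℂ) :=
    Continuous.matrix_map continuous_id Complex.continuous_ofReal
  have h := NormedSpace.map_exp (Complex.ofRealHom.mapMatrix : Matrix n n ℝ →+* Matrix n n ℂ)
    hcont M
  simp only [RingHom.mapMatrix_apply] at h; exact h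

lemma exists_decay [Nonempty n] (S : Matrix n n ℝ)
    (hS : ∀ lam : ℂ, lam ∈ spectrum ℂ (S.map (Complex.ofReal ·)) → lam.re < 0) :
    ∃ C > 0, ∃ b > 0, ∀ x : ℝ, 0 ≤ x →
      ‖NormedSpace.exp (x • S)‖ ≤ C * Real.exp (-b * x) := by
  set A := S.map (Complex.ofReal ·) with hA
  have hne : (spectrum ℂ A).Nonempty := spectrum.nonempty A
  obtain ⟨lam₀, hlam₀, hmax⟩ := (spectrum.isCompact A).exists_isMaxOn hne
    Complex.continuous_re.continuousOn
  set m : ℝ := lam₀.re with hm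
  have hm0 : m < 0 := hS lam₀ hlam₀
  set b : ℝ := -(m / 2) with hb
  have hb0 : 0 < b := by rw [hb]; linarith
  set ρ : ℝ := Real.exp (-b) with hρ
  have hρ0 : 0 < ρ := Real.exp_pos _
  have hρ1 : ρ < 1 := by rw [hρ, Real.exp_lt_one_iff]; linarith
  set E := NormedSpace.exp A with hE
  have hrad : spectralRadius ℂ E < (ρ.toNNReal : ℝ≥0∞) := by
    apply spectrum.spectralRadius_lt_of_forall_lt_of_nonempty
    · rw [hE, spectrum_exp A]; exact hne.image _
    · intro μ hμ
      rw [hE, spectrum_exp A] at hμ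
      obtain ⟨lam, hlam, rfl⟩ := hμ
      have h1 : ‖Complex.exp lam‖ = Real.exp lam.re := Complex.norm_exp lam
      have h2 : lam.re ≤ m := hmax hlam
      have h3 : ‖Complex.exp lam‖ < ρ := by
        rw [h1, hρ, Real.exp_lt_exp]
        rw [hb]; linarith
      rw [← norm_toNNReal]
      exact (Real.toNNReal_lt_toNNReal_iff hρ0).mpr h3
  have hgel := spectrum.pow_nnnorm_pow_one_div_tendsto_nhds_spectralRadius E
  have hev : ∀ᶠ k : ℕ in atTop, (‖E ^ k‖₊ : ℝ≥0∞) ^ (1 / (k : ℝ)) < (ρ.toNNReal : ℝ≥0∞) :=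
    hgel.eventually_lt_const hrad
  obtain ⟨N, hN⟩ := eventually_atTop.mp hev
  set K := max N 1 with hK
  have hgeo : ∀ k, K ≤ k → ‖E ^ k‖ ≤ ρ ^ k := by
    intro k hk
    have hk1 : 1 ≤ k := le_trans (le_max_right N 1) hk
    have hkR : (k : ℝ) ≠ 0 := Nat.cast_ne_zero.mpr (by omega)
    have h := hN k (le_trans (le_max_left N 1) hk)
    have h2 : ((‖E ^ k‖₊ : ℝ≥0∞) ^ (1 / (k : ℝ))) ^ (k : ℝ)
        ≤ ((ρ.toNNReal : ℝ≥0∞)) ^ (k : ℝ) :=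
      ENNReal.rpow_le_rpow h.le (Nat.cast_nonneg k)
    rw [← ENNReal.rpow_mul, one_div, inv_mul_cancel₀ hkR, ENNReal.rpow_one,
      ENNReal.rpow_natCast, ← ENNReal.coe_pow, ENNReal.coe_le_coe] at h2
    have h3 : (‖E ^ k‖₊ : ℝ) ≤ ((ρ.toNNReal ^ k : ℝ≥0) : ℝ) := NNReal.coe_le_coe.mpr h2
    rwa [coe_nnnorm, NNReal.coe_pow, Real.coe_toNNReal _ hρ0.le] at h3
  set C₁ : ℝ := 1 + ∑ j ∈ Finset.range K, ‖E ^ j‖ / ρ ^ j with hC₁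
  have hsumnn : 0 ≤ ∑ j ∈ Finset.range K, ‖E ^ j‖ / ρ ^ j :=
    Finset.sum_nonneg fun j _ => by positivity
  have hC₁1 : 1 ≤ C₁ := by rw [hC₁]; linarith
  have hgeo' : ∀ k : ℕ, ‖E ^ k‖ ≤ C₁ * ρ ^ k := by
    intro k
    rcases le_or_gt K k with h | h
    · calc ‖E ^ k‖ ≤ ρ ^ k := hgeo k h
        _ ≤ C₁ * ρ ^ k := le_mul_of_one_le_left (by positivity) hC₁1
    · have h1 : ‖E ^ k‖ / ρ ^ k ≤ ∑ j ∈ Finset.range K, ‖E ^ j‖ / ρ ^ j :=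
        Finset.single_le_sum (f := fun j => ‖E ^ j‖ / ρ ^ j)
          (fun j _ => by positivity) (Finset.mem_range.mpr h)
      have h2 : ‖E ^ k‖ / ρ ^ k ≤ C₁ := by rw [hC₁]; linarith
      rwa [div_le_iff₀ (by positivity)] at h2
  have hpow : ∀ k : ℕ, ‖NormedSpace.exp S ^ k‖ = ‖E ^ k‖ := by
    intro k
    rw [← norm_map_ofReal]
    congr 1
    have h : (NormedSpace.exp S ^ k).map (Complex.ofReal ·)
        = ((NormedSpace.exp S).map (Complex.ofReal ·)) ^ k := by
      have := map_pow (Complex.ofRealHom.mapMatrix : Matrix n n ℝ →+* Matrix n n ℂ)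
          (NormedSpace.exp S) k
      simp only [RingHom.mapMatrix_apply] at this; exact this
    rw [h, map_exp_ofReal]
  obtain ⟨C₂, hC₂⟩ := (isCompact_Icc (a := (0 : ℝ)) (b := 1)).exists_bound_of_continuousOn
    (f := fun x : ℝ => NormedSpace.exp (x • S))
    ((NormedSpace.exp_continuous.comp (continuous_id.smul continuous_const)).continuousOn)
  set C₂' : ℝ := max C₂ 1 with hC₂'
  have hC₂'1 : (1 : ℝ) ≤ C₂' := le_max_right _ _
  refine ⟨C₁ * C₂' * Real.exp b, by positivity, b, hb0, ?_⟩
  intro x hx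
  set k := ⌊x⌋₊ with hk
  have hkx : (k : ℝ) ≤ x := Nat.floor_le hx
  have hxk : x < k + 1 := Nat.lt_floor_add_one x
  have hsplit : NormedSpace.exp (x • S)
      = NormedSpace.exp S ^ k * NormedSpace.exp ((x - k) • S) := by
    have h1 : x • S = (k : ℝ) • S + (x - k) • S := by rw [← add_smul]; ring_nf
    rw [h1, Matrix.exp_add_of_commute _ _ (((Commute.refl S).smul_left _).smul_right _)]
    congr 1
    rw [Nat.cast_smul_eq_nsmul ℝ k S, Matrix.exp_nsmul]
  have hbd2 : ‖NormedSpace.exp ((x - k) • S)‖ ≤ C₂' :=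
    le_trans (hC₂ (x - k) ⟨by linarith, by linarith⟩) (le_max_left _ _)
  have hkey : ρ ^ k ≤ Real.exp b * Real.exp (-b * x) := by
    rw [hρ, ← Real.exp_nat_mul, ← Real.exp_add, Real.exp_le_exp]
    nlinarith [hb0, hkx, hxk]
  calc ‖NormedSpace.exp (x • S)‖
      ≤ ‖NormedSpace.exp S ^ k‖ * ‖NormedSpace.exp ((x - k) • S)‖ := by
        rw [hsplit]; exact norm_mul_le _ _
    _ ≤ (C₁ * ρ ^ k) * C₂' := by
        apply mul_le_mul (hpow k ▸ hgeo' k) hbd2 (norm_nonneg _) (by positivity)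
    _ ≤ (C₁ * (Real.exp b * Real.exp (-b * x))) * C₂' := by
        have h1 : (0:ℝ) ≤ C₁ := by linarith
        have h2 : (0:ℝ) ≤ C₂' := by linarith
        gcongr
    _ = C₁ * C₂' * Real.exp b * Real.exp (-b * x) := by ring


end IntegralExpAux

/-- If every eigenvalue of the real square matrix `S` (viewed as a complex matrix) has
strictly negative real part, then `S` is invertible, the matrix-valued function
`x ↦ exp (x • S)` is Bochner integrable on `(0, ∞)`, and `∫₀^∞ exp (x • S) dx = -S⁻¹`. -/
theorem integral_exp_of_spectrum_re_neg {n : Type*} [Fintype n] [DecidableEq n]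
    (S : Matrix n n ℝ)
    (hS : ∀ lam : ℂ, lam ∈ spectrum ℂ (S.map (Complex.ofReal ·)) → lam.re < 0) :
    IsUnit S ∧
    (haveI : ContinuousENorm (Matrix n n ℝ) := SeminormedAddGroup.toContinuousENorm
    IntegrableOn (fun x : ℝ => NormedSpace.exp (x • S)) (Set.Ioi 0)) ∧
    ∫ x : ℝ in Set.Ioi 0, NormedSpace.exp (x • S) = -S⁻¹ := by
  letI : NormedRing (Matrix n n ℝ) := Matrix.frobeniusNormedRing
  letI : NormedAlgebra ℝ (Matrix n n ℝ) := Matrix.frobeniusNormedAlgebra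
  letI : NormedAlgebra ℚ (Matrix n n ℝ) := Matrix.frobeniusNormedAlgebra
  rcases isEmpty_or_nonempty n with hn | hn
  · have hsub : Subsingleton (Matrix n n ℝ) :=
      ⟨fun M N => by ext i j; exact (hn.false i).elim⟩
    have hzero : (fun x : ℝ => NormedSpace.exp (x • S)) = fun _ => (0 : Matrix n n ℝ) :=
      funext fun _ => Subsingleton.elim _ _
    refine ⟨isUnit_of_subsingleton S, ?_, ?_⟩
    · rw [hzero]; refine ⟨aestronglyMeasurable_const, ?_⟩; simp [HasFiniteIntegral, enorm]
    · rw [hzero, integral_zero]; exact Subsingleton.elim _ _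
  · set A := S.map (Complex.ofReal ·) with hA
    -- S is invertible
    have hAunit : IsUnit A := by
      by_contra h
      have h0 : (0 : ℂ) ∈ spectrum ℂ A := by
        rw [spectrum.zero_mem_iff]; exact h
      simpa using hS 0 h0
    have hdet : IsUnit S.det := by
      have h1 : IsUnit A.det := (Matrix.isUnit_iff_isUnit_det A).mp hAunit
      rw [isUnit_iff_ne_zero] at h1
      rw [isUnit_iff_ne_zero]
      intro h
      apply h1
      have : A.det = (Complex.ofRealHom : ℝ →+* ℂ) S.det := by
        rw [RingHom.map_det]; rfl
      rw [this, h]; simp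
    have hSunit : IsUnit S := (Matrix.isUnit_iff_isUnit_det S).mpr hdet
    obtain ⟨C, hC0, b, hb0, hbound⟩ := IntegralExpAux.exists_decay S hS
    set f : ℝ → Matrix n n ℝ := fun x => NormedSpace.exp (x • S) with hf
    have hfc : Continuous f :=
      NormedSpace.exp_continuous.comp (continuous_id.smul continuous_const)
    letI : ContinuousENorm (Matrix n n ℝ) := SeminormedAddGroup.toContinuousENorm
    letI : TopologicalSpace.PseudoMetrizableSpace (Matrix n n ℝ) :=
      inferInstanceAs (TopologicalSpace.PseudoMetrizableSpace (n → n → ℝ))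
    have hint : IntegrableOn f (Set.Ioi 0) := by
      have hg : IntegrableOn (fun x => C * Real.exp (-b * x)) (Set.Ioi (0 : ℝ)) :=
        (exp_neg_integrableOn_Ioi 0 hb0).const_mul C
      refine hg.integrable.mono' hfc.aestronglyMeasurable.restrict ?_
      rw [ae_restrict_iff' measurableSet_Ioi]
      exact Filter.Eventually.of_forall fun x hx => hbound x (le_of_lt hx)
    have htend : Filter.Tendsto f Filter.atTop (nhds 0) := by
      have hg : Filter.Tendsto (fun x : ℝ => C * Real.exp (-b * x)) Filter.atTop (nhds 0) := by
        have h1 : Filter.Tendsto (fun x : ℝ => -b * x) Filter.atTop Filter.atBot :=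
          Filter.Tendsto.const_mul_atTop_of_neg (by linarith) Filter.tendsto_id
        have h2 := Real.tendsto_exp_atBot.comp h1
        have h3 := h2.const_mul C
        simpa using h3
      refine squeeze_zero_norm' ?_ hg
      exact Filter.eventually_atTop.mpr ⟨0, fun x hx => hbound x hx⟩
    have hderiv : ∀ x ∈ Set.Ici (0 : ℝ),
        HasDerivAt (fun u : ℝ => NormedSpace.exp (u • S) * S⁻¹) (f x) x := by
      intro x _
      have h := (hasDerivAt_exp_smul_const (𝕂 := ℝ) S x).mul_const S⁻¹
      have heq : NormedSpace.exp (x • S) * S * S⁻¹ = f x := by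
        rw [mul_assoc, Matrix.mul_nonsing_inv S hdet, mul_one]
      exact h.congr_deriv heq
    have htendF : Filter.Tendsto (fun x : ℝ => NormedSpace.exp (x • S) * S⁻¹)
        Filter.atTop (nhds 0) := by
      have := htend.mul_const S⁻¹
      simpa using this
    have hFTC := MeasureTheory.integral_Ioi_of_hasDerivAt_of_tendsto' hderiv hint htendF
    refine ⟨hSunit, hint, ?_⟩
    rw [hFTC]
    simp [NormedSpace.exp_zero]
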